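/- arXiv:0705.1143 — 2 statements merged into one kernel-verified Lean document; each statement's English description precedes it below -/
import Mathlib

section
/- Let a be an odd integer with a ≥ 3, and let t₁,…,t₁₁ be odd integers satisfying a² - (t₁² + ⋯ + t₁₁²) + 2 ≥ 0 and 7a - 2(t₁ + ⋯ + t₁₁) < 0. Then a = 3 and t₁ = t₂ = ⋯ = t₁₁ = 1. -/
/-- if a is an odd integer with a ≥ 3 and t₁,…,t₁₁ are odd
integers with a² - Σtᵢ² + 2 ≥ 0 and 7a - 2Σtᵢ < 0, then a = 3 and all tᵢ = 1. -/
theorem stmt3 (a : ℤ) (ha : Odd a) (ha3 : 3 ≤ a) (t : Fin 11 → ℤ)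
    (hodd : ∀ i, Odd (t i))
    (hd : 0 ≤ a ^ 2 - (∑ i, (t i) ^ 2) + 2)
    (hH : 7 * a - 2 * ∑ i, t i < 0) :
    a = 3 ∧ ∀ i, t i = 1 := by
  set s := ∑ i, t i with hs
  set q := ∑ i, (t i) ^ 2 with hq
  -- Cauchy-Schwarz: s^2 ≤ 11 * q
  have hCS : s ^ 2 ≤ 11 * q := by
    have := Finset.sum_mul_sq_le_sq_mul_sq Finset.univ (fun _ : Fin 11 => (1 : ℤ)) t
    simpa using this
  -- a = 3
  have ha4 : a ^ 2 < 18 := by nlinarith [sq_nonneg a]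
  have haeq : a = 3 := by
    have h4 : a ≤ 4 := by nlinarith
    rcases ha with ⟨k, hk⟩
    omega
  subst haeq
  have hq11 : q ≤ 11 := by linarith
  -- each t i ^ 2 ≥ 1
  have hsq1 : ∀ i, 1 ≤ (t i) ^ 2 := fun i => by
    rcases hodd i with ⟨k, hk⟩
    have hkk : 0 ≤ k * (k + 1) := by
      rcases le_or_gt 0 k with h | h
      · exact mul_nonneg h (by omega)
      · have h1 : k ≤ -1 := by omega
        nlinarith
    rw [hk]; nlinarith
  -- each t i ^ 2 ≤ 1, hence = 1
  have hsq : ∀ i, (t i) ^ 2 = 1 := by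
    intro i
    have hsplit : (t i) ^ 2 + ∑ j ∈ Finset.univ.erase i, (t j) ^ 2 = q := by
      rw [hq]; exact Finset.add_sum_erase Finset.univ (fun j => t j ^ 2) (Finset.mem_univ i)
    have h10 : (10 : ℤ) ≤ ∑ j ∈ Finset.univ.erase i, (t j) ^ 2 := by
      calc (10 : ℤ) = (Finset.univ.erase i).card • (1 : ℤ) := by simp
        _ ≤ ∑ j ∈ Finset.univ.erase i, (t j) ^ 2 :=
          Finset.card_nsmul_le_sum _ _ _ (fun j _ => hsq1 j)
    have := hsq1 i
    omega
  have habs : ∀ i, t i = 1 ∨ t i = -1 := by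
    intro i
    have h0 : (t i - 1) * (t i + 1) = 0 := by linear_combination hsq i
    rcases mul_eq_zero.mp h0 with h | h
    · left; omega
    · right; omega
  -- s ≥ 11
  have hs11 : 11 ≤ s := by omega
  have hti : ∀ i, t i = 1 := by
    intro i
    have hsplit : t i + ∑ j ∈ Finset.univ.erase i, t j = s := by
      rw [hs]; exact Finset.add_sum_erase Finset.univ t (Finset.mem_univ i)
    have h10 : (∑ j ∈ Finset.univ.erase i, t j) ≤ 10 := by
      calc ∑ j ∈ Finset.univ.erase i, t j
          ≤ (Finset.univ.erase i).card • (1 : ℤ) :=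
            Finset.sum_le_card_nsmul _ _ _ (fun j _ => by rcases habs j with h | h <;> omega)
        _ = 10 := by simp
    rcases habs i with h | h <;> omega
  exact ⟨rfl, hti⟩
end

section
/- Let M be a free ℤ-module of rank 9 with a symmetric bilinear form isomorphic to ⟨1⟩ ⊕ 8⟨-1⟩, with orthogonal basis v₁,…,v₉ where v₁² = 1 and vᵢ² = -1 for i ≥ 2. If K ∈ M is characteristic (K·x ≡ x·x mod 2 for all x ∈ M) and K² = 1, then there exists an automorphism of M preserving the bilinear form that maps K to 3v₁ - v₂ - ⋯ - v₉. -/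
/-- The bilinear form ⟨1⟩ ⊕ 8⟨-1⟩ on ℤ⁹, in an orthogonal basis v₁,…,v₉
(the standard basis) with v₁² = 1 and vᵢ² = -1 for i ≥ 2. -/
def formOneEight (x y : Fin 9 → ℤ) : ℤ :=
  x 0 * y 0 - ∑ i : Fin 8, x i.succ * y i.succ

lemma form_add_left (x y z : Fin 9 → ℤ) :
    formOneEight (x + y) z = formOneEight x z + formOneEight y z := by
  simp [formOneEight, add_mul, Finset.sum_add_distrib]; ring

lemma form_smul_left (c : ℤ) (x y : Fin 9 → ℤ) :
    formOneEight (c • x) y = c * formOneEight x y := by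
  simp [formOneEight, mul_sub, Finset.mul_sum]; ring

lemma form_comm (x y : Fin 9 → ℤ) : formOneEight x y = formOneEight y x := by
  simp [formOneEight, mul_comm]

lemma form_add_right (x y z : Fin 9 → ℤ) :
    formOneEight x (y + z) = formOneEight x y + formOneEight x z := by
  rw [form_comm, form_add_left, form_comm y x, form_comm z x]

lemma form_smul_right (c : ℤ) (x y : Fin 9 → ℤ) :
    formOneEight x (c • y) = c * formOneEight x y := by
  rw [form_comm, form_smul_left, form_comm]

def reflMap (u : Fin 9 → ℤ) : (Fin 9 → ℤ) →ₗ[ℤ] (Fin 9 → ℤ) where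
  toFun x := x + formOneEight x u • u
  map_add' x y := by simp only [form_add_left, add_smul]; abel
  map_smul' c x := by simp only [form_smul_left, RingHom.id_apply, smul_assoc]; module

def reflEquiv (u : Fin 9 → ℤ) (hu : formOneEight u u = -2) :
    (Fin 9 → ℤ) ≃ₗ[ℤ] (Fin 9 → ℤ) :=
  { reflMap u with
    invFun := reflMap u
    left_inv := fun x => by
      show reflMap u (reflMap u x) = x
      simp only [reflMap, LinearMap.coe_mk, AddHom.coe_mk, form_add_left, form_smul_left, hu]
      module
    right_inv := fun x => by
      show reflMap u (reflMap u x) = x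
      simp only [reflMap, LinearMap.coe_mk, AddHom.coe_mk, form_add_left, form_smul_left, hu]
      module }

lemma reflEquiv_apply (u : Fin 9 → ℤ) (hu : formOneEight u u = -2) (x : Fin 9 → ℤ) :
    reflEquiv u hu x = x + formOneEight x u • u := rfl

lemma reflEquiv_preserves (u : Fin 9 → ℤ) (hu : formOneEight u u = -2) (x y : Fin 9 → ℤ) :
    formOneEight (reflEquiv u hu x) (reflEquiv u hu y) = formOneEight x y := by
  simp only [reflEquiv_apply, form_add_left, form_add_right, form_smul_left, form_smul_right, hu]
  rw [form_comm u y]; ring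

def signEquiv (ε : Fin 9 → ℤ) (hε : ∀ i, ε i * ε i = 1) :
    (Fin 9 → ℤ) ≃ₗ[ℤ] (Fin 9 → ℤ) where
  toFun x := fun i => ε i * x i
  map_add' x y := by funext i; simp [mul_add]
  map_smul' c x := by funext i; simp [mul_left_comm]
  invFun x := fun i => ε i * x i
  left_inv x := by funext i; simp [← mul_assoc, hε i]
  right_inv x := by funext i; simp [← mul_assoc, hε i]

lemma signEquiv_apply (ε : Fin 9 → ℤ) (hε : ∀ i, ε i * ε i = 1) (x : Fin 9 → ℤ) (i : Fin 9) :
    signEquiv ε hε x i = ε i * x i := rfl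

lemma signEquiv_preserves (ε : Fin 9 → ℤ) (hε : ∀ i, ε i * ε i = 1) (x y : Fin 9 → ℤ) :
    formOneEight (signEquiv ε hε x) (signEquiv ε hε y) = formOneEight x y := by
  have h : ∀ i, (ε i * x i) * (ε i * y i) = x i * y i := fun i => by
    linear_combination (x i * y i) * hε i
  simp only [formOneEight, signEquiv_apply, h]

def uvec (i j k : Fin 8) : Fin 9 → ℤ :=
  fun l => if l = 0 ∨ l = i.succ ∨ l = j.succ ∨ l = k.succ then 1 else 0

lemma uvec_zero (i j k : Fin 8) : uvec i j k 0 = 1 := by simp [uvec]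

lemma uvec_vals (i j k : Fin 8) (l : Fin 9) : uvec i j k l = 0 ∨ uvec i j k l = 1 := by
  unfold uvec; split_ifs <;> simp

lemma uvec_form (i j k : Fin 8) (hji : j ≠ i) (hkj : k ≠ j) (hki : k ≠ i) (x : Fin 9 → ℤ) :
    formOneEight x (uvec i j k) = x 0 - (x i.succ + x j.succ + x k.succ) := by
  have h1 : ∀ m : Fin 8, x m.succ * uvec i j k m.succ =
      if m ∈ ({i, j, k} : Finset (Fin 8)) then x m.succ else 0 := by
    intro m
    have hcond : ((m.succ : Fin 9) = 0 ∨ m.succ = i.succ ∨ m.succ = j.succ ∨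
        m.succ = k.succ) ↔ (m ∈ ({i, j, k} : Finset (Fin 8))) := by
      simp [Fin.succ_ne_zero, Fin.succ_inj]
    simp only [uvec, hcond, mul_ite, mul_one, mul_zero]
  rw [formOneEight, uvec_zero, mul_one]
  congr 1
  rw [Finset.sum_congr rfl fun m _ => h1 m, Finset.sum_ite_mem, Finset.univ_inter]
  rw [Finset.sum_insert (by simp [Ne.symm hji, Ne.symm hki]),
    Finset.sum_insert (by simp [Ne.symm hkj]), Finset.sum_singleton]
  ring

lemma uvec_succ_vals (i j k : Fin 8) : uvec i j k i.succ = 1 ∧ uvec i j k j.succ = 1 ∧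
    uvec i j k k.succ = 1 := by
  refine ⟨?_, ?_, ?_⟩ <;> simp [uvec]

lemma uvec_norm (i j k : Fin 8) (hji : j ≠ i) (hkj : k ≠ j) (hki : k ≠ i) :
    formOneEight (uvec i j k) (uvec i j k) = -2 := by
  rw [uvec_form i j k hji hkj hki, uvec_zero, (uvec_succ_vals i j k).1,
    (uvec_succ_vals i j k).2.1, (uvec_succ_vals i j k).2.2]
  norm_num

def target9 : Fin 9 → ℤ := fun i => if (i : ℕ) = 0 then 3 else -1

def Good (K : Fin 9 → ℤ) : Prop :=
  ∃ φ : (Fin 9 → ℤ) ≃ₗ[ℤ] (Fin 9 → ℤ),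
    (∀ x y, formOneEight (φ x) (φ y) = formOneEight x y) ∧ φ K = target9

lemma good_of_map (ψ : (Fin 9 → ℤ) ≃ₗ[ℤ] (Fin 9 → ℤ))
    (hψ : ∀ x y, formOneEight (ψ x) (ψ y) = formOneEight x y)
    (K : Fin 9 → ℤ) (h : Good (ψ K)) : Good K := by
  obtain ⟨φ, hφ1, hφ2⟩ := h
  exact ⟨ψ.trans φ, fun x y => by
      rw [LinearEquiv.trans_apply, LinearEquiv.trans_apply, hφ1, hψ],
    by rw [LinearEquiv.trans_apply, hφ2]⟩

lemma good_abs (K : Fin 9 → ℤ) (h : Good (fun i => |K i|)) : Good K := by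
  have hε : ∀ i, (if 0 ≤ K i then (1:ℤ) else -1) * (if 0 ≤ K i then (1:ℤ) else -1) = 1 :=
    fun i => by split_ifs <;> norm_num
  apply good_of_map (signEquiv _ hε) (signEquiv_preserves _ hε)
  have heq : signEquiv _ hε K = fun i => |K i| := by
    funext i
    rw [signEquiv_apply]
    split_ifs with h'
    · rw [one_mul, abs_of_nonneg h']
    · rw [neg_one_mul, abs_of_neg (lt_of_not_ge h')]
  rwa [heq]

set_option maxHeartbeats 2000000 in
lemma main9 : ∀ n : ℕ, ∀ K : Fin 9 → ℤ, (∀ i, Odd (K i)) → formOneEight K K = 1 →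
    (K 0).natAbs ≤ n → Good K := by
  intro n
  induction n with
  | zero =>
    intro K hodd _ hle
    exfalso
    have h2 := Int.odd_iff.mp (hodd 0)
    omega
  | succ n ih =>
    intro K hodd hK hle
    apply good_abs
    set L : Fin 9 → ℤ := fun i => |K i| with hLdef
    have hLodd : ∀ i, Odd (L i) := fun i => by
      rcases abs_choice (K i) with h | h <;> simp only [hLdef, h]
      · exact hodd i
      · exact (hodd i).neg
    have hLform : formOneEight L L = 1 := by
      have : ∀ i : Fin 9, L i * L i = K i * K i := fun i => by
        simp only [hLdef]; exact abs_mul_abs_self _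
      simp only [formOneEight, this]; exact hK
    have hLpos : ∀ i, 1 ≤ L i := fun i => by
      have h0 : (0:ℤ) ≤ L i := abs_nonneg _
      have h2 := Int.odd_iff.mp (hLodd i)
      omega
    have hle' : (L 0).natAbs ≤ n + 1 := by
      have : L 0 = |K 0| := rfl
      rw [this, Int.natAbs_abs]; exact hle
    have hform' : L 0 * L 0 - ∑ m : Fin 8, L m.succ * L m.succ = 1 := hLform
    have hb8 : (8:ℤ) ≤ ∑ m : Fin 8, L m.succ * L m.succ := by
      calc (8:ℤ) = ∑ _m : Fin 8, (1:ℤ) := by simp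
        _ ≤ _ := Finset.sum_le_sum fun m _ => by nlinarith [hLpos m.succ]
    have ha3 : 3 ≤ L 0 := by nlinarith [hLpos 0]
    by_cases hc : L 0 = 3
    · -- base case: L = (3,1,…,1)
      have hsum8 : ∑ m : Fin 8, L m.succ * L m.succ = 8 := by rw [hc] at hform'; linarith
      have hb1 : ∀ m : Fin 8, L m.succ = 1 := by
        intro m
        have key : L m.succ * L m.succ + ∑ l ∈ Finset.univ.erase m, L l.succ * L l.succ
            = ∑ l : Fin 8, L l.succ * L l.succ :=
          Finset.add_sum_erase _ (fun l => L l.succ * L l.succ) (Finset.mem_univ m)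
        have h7 : (7:ℤ) ≤ ∑ l ∈ Finset.univ.erase m, L l.succ * L l.succ := by
          have hcard : (Finset.univ.erase m).card = 7 := by
            rw [Finset.card_erase_of_mem (Finset.mem_univ m)]; simp
          calc (7:ℤ) = ∑ _l ∈ Finset.univ.erase m, (1:ℤ) := by
                rw [Finset.sum_const, hcard]; simp
            _ ≤ _ := Finset.sum_le_sum fun l _ => by nlinarith [hLpos l.succ]
        have hLL : L m.succ * L m.succ ≤ 1 := by
          rw [hsum8] at key; linarith
        have hle1 : L m.succ ≤ 1 := by nlinarith [hLpos m.succ]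
        linarith [hLpos m.succ]
      have hε : ∀ i : Fin 9, (if (i:ℕ) = 0 then (1:ℤ) else -1) *
          (if (i:ℕ) = 0 then (1:ℤ) else -1) = 1 := fun i => by split_ifs <;> norm_num
      refine ⟨signEquiv _ hε, signEquiv_preserves _ hε, ?_⟩
      funext l
      rcases Fin.eq_zero_or_eq_succ l with rfl | ⟨p, rfl⟩
      · simp [signEquiv_apply, target9, hc]
      · have hp : ((p.succ : Fin 9) : ℕ) ≠ 0 := by simp [Fin.val_succ]
        simp [signEquiv_apply, target9, hp, hb1 p]
    · -- descent case: L 0 ≥ 5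
      have ha5 : 5 ≤ L 0 := by
        have h2 := Int.odd_iff.mp (hLodd 0); omega
      obtain ⟨i, -, hi⟩ := Finset.exists_max_image (Finset.univ : Finset (Fin 8))
        (fun m => L m.succ) ⟨0, Finset.mem_univ 0⟩
      have hne1 : (Finset.univ.erase i).Nonempty := by
        rw [← Finset.card_pos, Finset.card_erase_of_mem (Finset.mem_univ i)]; simp
      obtain ⟨j, hjmem, hj⟩ := Finset.exists_max_image (Finset.univ.erase i)
        (fun m => L m.succ) hne1
      have hne2 : ((Finset.univ.erase i).erase j).Nonempty := by
        rw [← Finset.card_pos, Finset.card_erase_of_mem hjmem,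
          Finset.card_erase_of_mem (Finset.mem_univ i)]; simp
      obtain ⟨k, hkmem, hk⟩ := Finset.exists_max_image ((Finset.univ.erase i).erase j)
        (fun m => L m.succ) hne2
      have hji : j ≠ i := (Finset.mem_erase.mp hjmem).1
      have hkj : k ≠ j := (Finset.mem_erase.mp hkmem).1
      have hki : k ≠ i := (Finset.mem_erase.mp (Finset.mem_erase.mp hkmem).2).1
      have hbi : ∀ l : Fin 8, L l.succ ≤ L i.succ := fun l => hi l (Finset.mem_univ l)
      have hbj : ∀ l : Fin 8, l ≠ i → L l.succ ≤ L j.succ := fun l hl =>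
        hj l (Finset.mem_erase.mpr ⟨hl, Finset.mem_univ l⟩)
      have hbk : ∀ l : Fin 8, l ≠ i → l ≠ j → L l.succ ≤ L k.succ := fun l hli hlj =>
        hk l (Finset.mem_erase.mpr ⟨hlj, Finset.mem_erase.mpr ⟨hli, Finset.mem_univ l⟩⟩)
      have hij2 : L j.succ ≤ L i.succ := hbi j
      have hjk2 : L k.succ ≤ L j.succ := hbj k hki
      have e1 : (∑ m : Fin 8, L m.succ * L m.succ) =
          L i.succ * L i.succ + ∑ l ∈ Finset.univ.erase i, L l.succ * L l.succ :=
        (Finset.add_sum_erase _ (fun l => L l.succ * L l.succ) (Finset.mem_univ i)).symm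
      have e2 : (∑ l ∈ Finset.univ.erase i, L l.succ * L l.succ) =
          L j.succ * L j.succ + ∑ l ∈ (Finset.univ.erase i).erase j, L l.succ * L l.succ :=
        (Finset.add_sum_erase _ (fun l => L l.succ * L l.succ) hjmem).symm
      have e3 : (∑ l ∈ (Finset.univ.erase i).erase j, L l.succ * L l.succ) =
          L k.succ * L k.succ +
            ∑ l ∈ ((Finset.univ.erase i).erase j).erase k, L l.succ * L l.succ :=
        (Finset.add_sum_erase _ (fun l => L l.succ * L l.succ) hkmem).symm
      have hsplit : L i.succ * L i.succ + (L j.succ * L j.succ + (L k.succ * L k.succ +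
          ∑ l ∈ ((Finset.univ.erase i).erase j).erase k, L l.succ * L l.succ)) =
          ∑ m : Fin 8, L m.succ * L m.succ := by
        rw [e1, e2, e3]
      have hScard : (((Finset.univ.erase i).erase j).erase k).card = 5 := by
        rw [Finset.card_erase_of_mem hkmem, Finset.card_erase_of_mem hjmem,
          Finset.card_erase_of_mem (Finset.mem_univ i)]; simp
      have hQ : (∑ l ∈ ((Finset.univ.erase i).erase j).erase k, L l.succ * L l.succ)
          ≤ 5 * (L k.succ * L k.succ) := by
        calc (∑ l ∈ ((Finset.univ.erase i).erase j).erase k, L l.succ * L l.succ)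
            ≤ ∑ _l ∈ ((Finset.univ.erase i).erase j).erase k, L k.succ * L k.succ := by
              apply Finset.sum_le_sum
              intro l hl
              have hlk : l ≠ k := (Finset.mem_erase.mp hl).1
              have hlj : l ≠ j := (Finset.mem_erase.mp (Finset.mem_erase.mp hl).2).1
              have hli : l ≠ i :=
                (Finset.mem_erase.mp (Finset.mem_erase.mp (Finset.mem_erase.mp hl).2).2).1
              have h1 := hLpos l.succ
              have h2 := hbk l hli hlj
              nlinarith
          _ = 5 * (L k.succ * L k.succ) := by rw [Finset.sum_const, hScard]; ring
      have hQ0 : (0:ℤ) ≤ ∑ l ∈ ((Finset.univ.erase i).erase j).erase k,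
          L l.succ * L l.succ :=
        Finset.sum_nonneg fun l _ => by nlinarith [hLpos l.succ]
      -- the key inequality: the top three exceed L 0
      have hs : L 0 < L i.succ + L j.succ + L k.succ := by
        by_contra hcon
        push_neg at hcon
        have hp1 : L k.succ * L k.succ ≤ L i.succ * L j.succ :=
          mul_le_mul (le_trans hjk2 hij2) hjk2 (by linarith [hLpos k.succ])
            (by linarith [hLpos i.succ])
        have hp2 : L k.succ * L k.succ ≤ L i.succ * L k.succ :=
          mul_le_mul_of_nonneg_right (le_trans hjk2 hij2) (by linarith [hLpos k.succ])
        have hp3 : L k.succ * L k.succ ≤ L j.succ * L k.succ :=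
          mul_le_mul_of_nonneg_right hjk2 (by linarith [hLpos k.succ])
        have hss : (L i.succ + L j.succ + L k.succ) * (L i.succ + L j.succ + L k.succ)
            ≤ L 0 * L 0 :=
          mul_self_le_mul_self
            (by linarith [hLpos i.succ, hLpos j.succ, hLpos k.succ]) hcon
        have hk1 : L k.succ = 1 := by
          have hkk : L k.succ * L k.succ ≤ 1 := by nlinarith
          have := hLpos k.succ
          nlinarith
        have hq1 : 0 ≤ (L i.succ - 1) * (L j.succ - 1) :=
          mul_nonneg (by linarith [hLpos i.succ]) (by linarith [hLpos j.succ])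
        have hq2 : 0 ≤ (L 0 - 1 - L i.succ - L j.succ) * (L i.succ + L j.succ - 2) :=
          mul_nonneg (by linarith) (by linarith [hLpos i.succ, hLpos j.succ])
        have hq3 : 0 ≤ (L 0 - 1 - L i.succ - L j.succ) * (L 0 - 1) :=
          mul_nonneg (by linarith) (by linarith)
        nlinarith
      -- apply the reflection in uvec i j k
      have hu2 : formOneEight (uvec i j k) (uvec i j k) = -2 := uvec_norm i j k hji hkj hki
      have ht : formOneEight L (uvec i j k) =
          L 0 - (L i.succ + L j.succ + L k.succ) := uvec_form i j k hji hkj hki L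
      have hK₂ : ∀ l, (reflEquiv (uvec i j k) hu2 L) l =
          L l + formOneEight L (uvec i j k) * uvec i j k l := fun l => by
        rw [reflEquiv_apply]; simp
      have hodd₂ : ∀ l, Odd ((reflEquiv (uvec i j k) hu2 L) l) := by
        intro l
        rw [Int.odd_iff, hK₂ l, ht]
        have h1 := Int.odd_iff.mp (hLodd l)
        have h2 := Int.odd_iff.mp (hLodd 0)
        have h3 := Int.odd_iff.mp (hLodd i.succ)
        have h4 := Int.odd_iff.mp (hLodd j.succ)
        have h5 := Int.odd_iff.mp (hLodd k.succ)
        rcases uvec_vals i j k l with h | h <;> rw [h] <;> omega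
      have hform₂ : formOneEight (reflEquiv (uvec i j k) hu2 L)
          (reflEquiv (uvec i j k) hu2 L) = 1 := by
        rw [reflEquiv_preserves]; exact hLform
      have h0₂ : (reflEquiv (uvec i j k) hu2 L) 0 =
          2 * L 0 - (L i.succ + L j.succ + L k.succ) := by
        rw [hK₂ 0, ht, uvec_zero]; ring
      have hbia : L i.succ < L 0 := by
        by_contra h
        push_neg at h
        have h2 : L 0 * L 0 ≤ L i.succ * L i.succ :=
          mul_self_le_mul_self (by linarith) h
        nlinarith [hLpos j.succ, hLpos k.succ]
      have hlt : ((reflEquiv (uvec i j k) hu2 L) 0).natAbs ≤ n := by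
        rw [h0₂]
        omega
      exact good_of_map (reflEquiv (uvec i j k) hu2) (reflEquiv_preserves (uvec i j k) hu2) L
        (ih _ hodd₂ hform₂ hlt)

/-- in the unimodular lattice ⟨1⟩ ⊕ 8⟨-1⟩, any characteristic
element K with K² = 1 is carried to 3v₁ - v₂ - ⋯ - v₉ by an automorphism of
the lattice preserving the bilinear form. -/
theorem stmt4 (K : Fin 9 → ℤ)
    (hchar : ∀ x : Fin 9 → ℤ, 2 ∣ formOneEight K x - formOneEight x x)
    (hK : formOneEight K K = 1) :
    ∃ φ : (Fin 9 → ℤ) ≃ₗ[ℤ] (Fin 9 → ℤ),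
      (∀ x y, formOneEight (φ x) (φ y) = formOneEight x y) ∧
      φ K = (fun i : Fin 9 => if (i : ℕ) = 0 then 3 else -1) := by
  have hodd : ∀ l : Fin 9, Odd (K l) := by
    intro l
    rcases Fin.eq_zero_or_eq_succ l with rfl | ⟨p, rfl⟩
    · have h1 : formOneEight K (fun m => if m = 0 then 1 else 0) = K 0 := by
        simp [formOneEight, Fin.succ_ne_zero]
      have h2 : formOneEight (fun m : Fin 9 => if m = 0 then (1:ℤ) else 0)
          (fun m => if m = 0 then 1 else 0) = 1 := by
        simp [formOneEight, Fin.succ_ne_zero]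
      have h3 := hchar (fun m => if m = 0 then 1 else 0)
      rw [h1, h2] at h3
      rw [Int.odd_iff]
      omega
    · have h1 : formOneEight K (fun m => if m = p.succ then 1 else 0) = -(K p.succ) := by
        simp [formOneEight, (Fin.succ_ne_zero p).symm, Fin.succ_inj, Finset.sum_ite_eq']
      have h2 : formOneEight (fun m : Fin 9 => if m = p.succ then (1:ℤ) else 0)
          (fun m => if m = p.succ then 1 else 0) = -1 := by
        simp [formOneEight, (Fin.succ_ne_zero p).symm, Fin.succ_inj, Finset.sum_ite_eq']
      have h3 := hchar (fun m => if m = p.succ then 1 else 0)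
      rw [h1, h2] at h3
      rw [Int.odd_iff]
      omega
  obtain ⟨φ, h1, h2⟩ := main9 (K 0).natAbs K hodd hK le_rfl
  exact ⟨φ, h1, h2⟩
end
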